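/- Let ρ_q(x) = cosh(√q x) - tanh(√q l') sinh(√q x) for x ∈ [0, l'] and q > 0. Then for each fixed x ∈ [0, l'], the function h_q(x) := H(q)(1 - ρ_q(x)) with H(q) = 1/(√q tanh(√q l')) converges to x - x²/(2l') as q → 0+. -/

import Mathlib

/-!
Writing `s = √q`, `h_q(x) = sinh (s x) / s - ((cosh (s x) - 1) / s²) / (tanh (s l') / s)`.
As `s → 0` the three difference quotients tend to `x`, `x² / 2` and `l'` respectively.
-/

open Filter Set Topology Real

lemma tendsto_div_self_of_hasDerivAt_zero {f : ℝ → ℝ} {c : ℝ} (hf : HasDerivAt f c 0)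
    (h0 : f 0 = 0) : Tendsto (fun s => f s / s) (𝓝[≠] 0) (𝓝 c) := by
  simpa [h0, div_eq_inv_mul] using hf.tendsto_slope_zero

lemma tendsto_sinh_mul_div_self (c : ℝ) :
    Tendsto (fun s => sinh (s * c) / s) (𝓝[≠] 0) (𝓝 c) := by
  refine tendsto_div_self_of_hasDerivAt_zero ?_ (by simp)
  simpa [Function.comp_def] using (hasDerivAt_sinh (0 * c)).comp 0 (hasDerivAt_mul_const c)

lemma tendsto_tanh_mul_div_self (c : ℝ) :
    Tendsto (fun s => tanh (s * c) / s) (𝓝[≠] 0) (𝓝 c) := by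
  have hcosh : Tendsto (fun s => cosh (s * c)) (𝓝[≠] 0) (𝓝 1) := by
    simpa [Function.comp_def] using
      ((continuous_cosh.comp (continuous_mul_const c)).tendsto 0).mono_left nhdsWithin_le_nhds
  simpa [Pi.div_def, tanh_eq_sinh_div_cosh, div_right_comm] using
    (tendsto_sinh_mul_div_self c).div hcosh one_ne_zero

lemma cosh_sub_one_eq_two_mul_sinh_half_sq (y : ℝ) : cosh y - 1 = 2 * sinh (y / 2) ^ 2 := by
  conv_lhs => rw [← mul_div_cancel₀ y two_ne_zero, cosh_two_mul, cosh_sq]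
  ring

lemma tendsto_cosh_mul_sub_one_div_sq (c : ℝ) :
    Tendsto (fun s => (cosh (s * c) - 1) / s ^ 2) (𝓝[≠] 0) (𝓝 (c ^ 2 / 2)) := by
  have h := ((tendsto_sinh_mul_div_self (c / 2)).pow 2).const_mul 2
  convert h using 2 with s
  · rw [cosh_sub_one_eq_two_mul_sinh_half_sq, div_pow, mul_div_assoc, mul_div_assoc]
  · ring

lemma one_div_mul_one_sub_sub_mul_eq {s t C S : ℝ} (hs : s ≠ 0) (ht : t ≠ 0) :
    1 / (s * t) * (1 - (C - t * S)) = S / s - ((C - 1) / s ^ 2) / (t / s) := by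
  field_simp
  ring

lemma tendsto_renormalizedResolvent {l : ℝ} (hl : l ≠ 0) (x : ℝ) :
    Tendsto (fun s => 1 / (s * tanh (s * l)) * (1 - (cosh (s * x) - tanh (s * l) * sinh (s * x))))
      (𝓝[≠] 0) (𝓝 (x - x ^ 2 / (2 * l))) := by
  have hlim := (tendsto_sinh_mul_div_self x).sub
    ((tendsto_cosh_mul_sub_one_div_sq x).div (tendsto_tanh_mul_div_self l) hl)
  rw [show x ^ 2 / 2 / l = x ^ 2 / (2 * l) by ring] at hlim
  refine hlim.congr' ?_
  filter_upwards [self_mem_nhdsWithin] with s (hs : s ≠ 0)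
  have ht : tanh (s * l) ≠ 0 := by
    rw [tanh_eq_sinh_div_cosh]
    exact div_ne_zero (sinh_ne_zero.mpr (mul_ne_zero hs hl)) (cosh_pos _).ne'
  exact (one_div_mul_one_sub_sub_mul_eq hs ht).symm

lemma tendsto_sqrt_nhdsGT_zero_nhdsNE : Tendsto sqrt (𝓝[>] 0) (𝓝[≠] 0) := by
  refine tendsto_nhdsWithin_of_tendsto_nhds_of_eventually_within _ ?_ ?_
  · simpa using (continuous_sqrt.tendsto 0).mono_left nhdsWithin_le_nhds
  · filter_upwards [self_mem_nhdsWithin] with q (hq : 0 < q)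
    exact (sqrt_pos.mpr hq).ne'

theorem stmt_4_general (l' : ℝ) (hl' : 0 < l') (ρ : ℝ → ℝ → ℝ) (H : ℝ → ℝ)
    (hρ : ∀ q x, ρ q x =
      Real.cosh (Real.sqrt q * x) - Real.tanh (Real.sqrt q * l') * Real.sinh (Real.sqrt q * x))
    (hH : ∀ q, H q = 1 / (Real.sqrt q * Real.tanh (Real.sqrt q * l')))
    (x : ℝ) :
    Tendsto (fun q => H q * (1 - ρ q x)) (nhdsWithin 0 (Ioi 0))
      (nhds (x - x ^ 2 / (2 * l'))) := by
  simp only [hH, hρ]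
  exact (tendsto_renormalizedResolvent hl'.ne' x).comp tendsto_sqrt_nhdsGT_zero_nhdsNE

theorem stmt_4 (l' : ℝ) (hl' : 0 < l') (ρ : ℝ → ℝ → ℝ) (H : ℝ → ℝ)
    (hρ : ∀ q x, ρ q x =
      Real.cosh (Real.sqrt q * x) - Real.tanh (Real.sqrt q * l') * Real.sinh (Real.sqrt q * x))
    (hH : ∀ q, H q = 1 / (Real.sqrt q * Real.tanh (Real.sqrt q * l')))
    (x : ℝ) (hx : x ∈ Icc (0 : ℝ) l') :
    Tendsto (fun q => H q * (1 - ρ q x)) (nhdsWithin 0 (Ioi 0))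
      (nhds (x - x ^ 2 / (2 * l'))) :=
  stmt_4_general l' hl' ρ H hρ hH x
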